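/- Let β be a normalized model of a 2^1-map D with p+1 edges, X the sum of coordinates of white vertices of degree > 1, Y the sum of coordinates of black vertices of degree > 1, k the number of white vertices of degree > 1 and l the number of black vertices of degree > 1. Then X ∈ I and Y ∉ I; consequently Xl − Yk ∉ I, in particular Xl − Yk ≠ 0, and the affine change z' = az + b with a = −k/(Xl − Yk), b = X/(Xl − Yk) is the unique affine transformation sending (X, Y) to (0, 1) in the sense that the new sums are aX + bk = 0 and aY + bl = 1; moreover a is ρ-integral with a ∉ I. -/

import Mathlib

/-!
Every vertex of degree > 1 contributes at least 2 to a degree sum of p + 1, so there are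
fewer than p such vertices of each colour and their numbers k, l are units at ρ.
Normalization puts each white coordinate counted in X in I and each black one counted in Y
in 1 + I, so X ≡ 0 and Y ≡ l mod I. Hence Xl − Yk ≡ −lk is a unit, and Cramer's rule gives
the unique solution a = −k/(Xl − Yk), b = X/(Xl − Yk), with a a unit as well.
-/

open Polynomial

/-- A normalized model (with respect to a valuation `v` over the prime `p`) of
a `2¹`-map with `p+1` edges, `n+1` white vertices with coordinates `x i` and
degrees `k i`, and `m+1` black vertices with coordinates `y j` and degrees
`l j`; `c` is the pole and `r` the second critical value of the Belyi
function `β = ∏ (z - x i)^{k i} / (r (z - c))`. -/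
structure NormalizedModel {K : Type*} [Field K] (v : AddValuation K (WithTop ℝ))
    (p n m : ℕ) where
  x : Fin (n + 1) → K
  k : Fin (n + 1) → ℕ
  y : Fin (m + 1) → K
  l : Fin (m + 1) → ℕ
  c : K
  r : K
  hx_inj : Function.Injective x
  hy_inj : Function.Injective y
  hk_pos : ∀ i, 0 < k i
  hl_pos : ∀ j, 0 < l j
  hk_sum : ∑ i, k i = p + 1
  hl_sum : ∑ j, l j = p + 1
  hnm : n + m = p - 1
  belyi : (∏ i, (X - C (x i)) ^ k i) - C r * (X - C c)
      = ∏ j, (X - C (y j)) ^ l j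
  white0 : ∃ i, x i = 0 ∧ 1 < k i
  black1 : ∃ j, y j = 1 ∧ 1 < l j
  integral_x : ∀ i, 0 ≤ v (x i)
  integral_y : ∀ j, 0 ≤ v (y j)
  integral_c : 0 ≤ v c
  white_I : ∀ i₁ i₂, ¬ (0 < v (x i₁)) → ¬ (0 < v (x i₂)) → i₁ = i₂
  white_exc : ∀ i, ¬ (0 < v (x i)) → k i = 1
  black_I : ∀ j₁ j₂, ¬ (0 < v (y j₁ - 1)) → ¬ (0 < v (y j₂ - 1)) → j₁ = j₂
  black_exc : ∀ j, ¬ (0 < v (y j - 1)) → l j = 1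

open Finset

namespace AddValuation

variable {R Γ₀ : Type*} [CommRing R] [LinearOrderedAddCommMonoidWithTop Γ₀]
  (v : AddValuation R Γ₀)

theorem map_natCast_nonneg (n : ℕ) : 0 ≤ v (n : R) := by
  induction n with
  | zero => simp
  | succ n ih => exact_mod_cast v.map_le_add ih v.map_one.ge

theorem map_intCast_nonneg (a : ℤ) : 0 ≤ v (a : R) := by
  obtain ⟨n, rfl | rfl⟩ := Int.eq_nat_or_neg a
  · exact_mod_cast v.map_natCast_nonneg n
  · simpa using v.map_natCast_nonneg n

theorem map_natCast_eq_zero_of_coprime {n p : ℕ} (hp : 0 < v (p : R)) (hnp : n.Coprime p) :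
    v (n : R) = 0 := by
  obtain ⟨a, b, hab⟩ := Nat.isCoprime_iff_coprime.mpr hnp
  refine le_antisymm (not_lt.mp fun hn => ?_) (v.map_natCast_nonneg n)
  have hbezout : (a : R) * n + (b : R) * p = 1 := by
    exact_mod_cast congrArg (Int.cast : ℤ → R) hab
  have key : 0 < v ((a : R) * n + (b : R) * p) :=
    v.map_lt_add
      (v.map_mul _ _ ▸ hn.trans_le (le_add_of_nonneg_left (v.map_intCast_nonneg a)))
      (v.map_mul _ _ ▸ hp.trans_le (le_add_of_nonneg_left (v.map_intCast_nonneg b)))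
  simp [hbezout] at key

end AddValuation

theorem Finset.two_mul_card_filter_one_lt_le_sum {ι : Type*} (s : Finset ι) (k : ι → ℕ) :
    2 * #(s.filter (1 < k ·)) ≤ ∑ i ∈ s, k i :=
  calc 2 * #(s.filter (1 < k ·)) ≤ ∑ i ∈ s.filter (1 < k ·), k i := by
        rw [mul_comm, ← smul_eq_mul]
        exact card_nsmul_le_sum _ _ 2 fun i hi => (mem_filter.mp hi).2
    _ ≤ ∑ i ∈ s, k i := sum_le_sum_of_subset (filter_subset (1 < k ·) s)

theorem eq_cramer_iff {K : Type*} [Field K] {X Y k l a b : K} (hd : X * l - Y * k ≠ 0) :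
    a * X + b * k = 0 ∧ a * Y + b * l = 1 ↔
      a = -k / (X * l - Y * k) ∧ b = X / (X * l - Y * k) := by
  rw [eq_div_iff hd, eq_div_iff hd]
  constructor
  · rintro ⟨h₁, h₂⟩
    exact ⟨by linear_combination l * h₁ - k * h₂,
      by linear_combination -Y * h₁ + X * h₂⟩
  · rintro ⟨ha, hb⟩
    refine ⟨mul_right_cancel₀ hd ?_, mul_right_cancel₀ hd ?_⟩
    · linear_combination X * ha + k * hb
    · linear_combination Y * ha + l * hb

namespace NormalizedModel

variable {K : Type*} [Field K] {v : AddValuation K (WithTop ℝ)} {p n m : ℕ}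
  (D : NormalizedModel v p n m)

def criticalWhite : Finset (Fin (n + 1)) := univ.filter (fun i => 1 < D.k i)

def criticalBlack : Finset (Fin (m + 1)) := univ.filter (fun j => 1 < D.l j)

theorem card_criticalWhite_pos : 0 < #D.criticalWhite :=
  let ⟨i, _, hi⟩ := D.white0
  card_pos.mpr ⟨i, mem_filter.mpr ⟨mem_univ i, hi⟩⟩

theorem card_criticalBlack_pos : 0 < #D.criticalBlack :=
  let ⟨j, _, hj⟩ := D.black1
  card_pos.mpr ⟨j, mem_filter.mpr ⟨mem_univ j, hj⟩⟩

theorem card_criticalWhite_lt (hp : 2 ≤ p) : #D.criticalWhite < p := by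
  have := D.hk_sum ▸ univ.two_mul_card_filter_one_lt_le_sum D.k
  unfold criticalWhite
  omega

theorem card_criticalBlack_lt (hp : 2 ≤ p) : #D.criticalBlack < p := by
  have := D.hl_sum ▸ univ.two_mul_card_filter_one_lt_le_sum D.l
  unfold criticalBlack
  omega

theorem sum_criticalWhite_pos : 0 < v (∑ i ∈ D.criticalWhite, D.x i) :=
  v.map_lt_sum WithTop.zero_ne_top fun i hi =>
    not_not.mp fun h => (mem_filter.mp hi).2.ne' (D.white_exc i h)

theorem sum_criticalBlack_sub_card_pos :
    0 < v (∑ j ∈ D.criticalBlack, D.y j - #D.criticalBlack) := by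
  rw [← nsmul_one, ← sum_const, ← sum_sub_distrib]
  exact v.map_lt_sum WithTop.zero_ne_top fun j hj =>
    not_not.mp fun h => (mem_filter.mp hj).2.ne' (D.black_exc j h)

end NormalizedModel

/-- for a normalized model, with `X` the sum of coordinates of
white vertices of degree `> 1`, `Y` that of black vertices of degree `> 1`,
`kc`, `lc` their numbers: `X ∈ I`, `Y ∉ I`, hence `X·lc − Y·kc ∉ I` (in
particular `≠ 0`), and `a = −kc/(X·lc − Y·kc)`, `b = X/(X·lc − Y·kc)` give the
unique affine change with `aX + b·kc = 0`, `aY + b·lc = 1`; moreover `a` is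
`ρ`-integral and `a ∉ I`. -/
theorem stmt14 {K : Type*} [Field K] (v : AddValuation K (WithTop ℝ))
    (p n m : ℕ) (hp : p.Prime)
    (D : NormalizedModel v p n m)
    (e : ℝ) (he : 0 < e) (hvp : v (p : K) = (e : WithTop ℝ))
    (X Y : K) (kc lc : ℕ)
    (hX : X = ∑ i ∈ Finset.univ.filter (fun i => 1 < D.k i), D.x i)
    (hY : Y = ∑ j ∈ Finset.univ.filter (fun j => 1 < D.l j), D.y j)
    (hkc : kc = (Finset.univ.filter (fun i => 1 < D.k i)).card)
    (hlc : lc = (Finset.univ.filter (fun j => 1 < D.l j)).card) :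
    0 < v X ∧ ¬ (0 < v Y) ∧
    ¬ (0 < v (X * (lc : K) - Y * (kc : K))) ∧
    X * (lc : K) - Y * (kc : K) ≠ 0 ∧
    (let d : K := X * (lc : K) - Y * (kc : K)
     let a : K := -(kc : K) / d
     let b : K := X / d
     a * X + b * (kc : K) = 0 ∧ a * Y + b * (lc : K) = 1 ∧
     (∀ a' b' : K, a' * X + b' * (kc : K) = 0 → a' * Y + b' * (lc : K) = 1 →
        a' = a ∧ b' = b) ∧
     0 ≤ v a ∧ ¬ (0 < v a)) := by
  have hvp_pos : 0 < v (p : K) := hvp ▸ WithTop.coe_pos.mpr he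
  have hv_card {N : ℕ} (h0 : 0 < N) (hlt : N < p) : v (N : K) = 0 :=
    v.map_natCast_eq_zero_of_coprime hvp_pos (Nat.coprime_of_lt_prime h0.ne' hlt hp).symm
  have hvk : v (kc : K) = 0 :=
    hkc ▸ hv_card D.card_criticalWhite_pos (D.card_criticalWhite_lt hp.two_le)
  have hvl : v (lc : K) = 0 :=
    hlc ▸ hv_card D.card_criticalBlack_pos (D.card_criticalBlack_lt hp.two_le)
  have hvX : 0 < v X := hX ▸ D.sum_criticalWhite_pos
  have hvY : v Y = 0 :=
    hvl ▸ v.map_eq_of_lt_sub (hvl ▸ hY ▸ hlc ▸ D.sum_criticalBlack_sub_card_pos)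
  have hvd : v (X * lc - Y * kc) = 0 := by
    have hvYk : v (Y * kc) = 0 := by rw [v.map_mul, hvY, hvk, add_zero]
    rw [v.map_sub_eq_of_lt_right (by rwa [hvYk, v.map_mul, hvl, add_zero]), hvYk]
  have hd : X * lc - Y * kc ≠ 0 := fun h => by simp [h] at hvd
  have hva : v (-(kc : K) / (X * lc - Y * kc)) = 0 := by
    rw [v.map_div, v.map_neg, hvk, hvd, sub_zero]
  have hab := (eq_cramer_iff hd).mpr ⟨rfl, rfl⟩
  exact ⟨hvX, hvY.le.not_gt, hvd.le.not_gt, hd, hab.1, hab.2,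
    fun a' b' h₁ h₂ => (eq_cramer_iff hd).mp ⟨h₁, h₂⟩, hva.ge, hva.le.not_gt⟩
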